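/- Let k be a field, A a Hopf algebra over k, and M a left Hopf module over A with coaction ρ. Then M is cofree as an A-comodule: there exist a k-vector space V and a k-linear isomorphism f : A ⊗_k V → M such that ρ(f(a ⊗ v)) = Σ a₍₁₎ ⊗ f(a₍₂₎ ⊗ v) for all a ∈ A and v ∈ V, i.e. f intertwines the coaction Δ ⊗ id_V on A ⊗_k V with ρ. -/

import Mathlib

open TensorProduct

/-!
`V` is the space of coinvariants `{m | ρ m = 1 ⊗ m}` and `f (a ⊗ v) = a • v`. In Sweedler
notation the inverse of `f` is `m ↦ m₍₋₁₎ ⊗ P m₍₀₎`, where `P m = S(m₍₋₁₎) • m₍₀₎` is a projection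
onto the coinvariants. That `P m` is coinvariant comes down to the identity
`Δ(S a₍₁₎) (a₍₂₎ ⊗ 1) = 1 ⊗ S a` in `A ⊗ A`, which follows in the convolution algebra of linear maps
`A → A ⊗ A` from `(Δ ∘ S) * Δ = 1` and `Δ * (1 ⊗ S(·)) = (· ⊗ 1)`.
-/

open Coalgebra HopfAlgebra WithConv LinearMap
open Algebra.TensorProduct (includeLeft includeRight)
open scoped RingTheory.LinearMap

namespace LinearMap

variable {R C : Type*} [CommSemiring R] [Semiring C] [HopfAlgebra R C]

lemma comul_left_inv : toConv (δ ∘ₗ antipode R (A := C)) * toConv δ = 1 := by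
  ext c
  rw [(ℛ R c).convMul_apply]
  simp [← Bialgebra.comul_mul, ← map_sum, sum_antipode_mul_eq_algebraMap_counit]

lemma comul_mul_includeRight_comp_antipode :
    toConv δ * toConv ((includeRight : C →ₐ[R] C ⊗[R] C).toLinearMap ∘ₗ antipode R) =
      toConv (includeLeft : C →ₐ[R] C ⊗[R] C).toLinearMap := by
  ext c
  have coassoc := congr(((μ ∘ₗ (antipode R).lTensor C).lTensor C)
    $(sum_tmul_tmul_eq (R := R) (ℛ R c) (fun _ ↦ ℛ R _) (fun _ ↦ ℛ R _)))
  have counit := congr((η : R →ₗ[R] C).lTensor C $(sum_tmul_counit_eq (ℛ R c)))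
  simp only [map_sum, lTensor_tmul, comp_apply, mul'_apply, ← tmul_sum,
    sum_mul_antipode_eq_algebraMap_counit] at coassoc counit
  rw [(ℛ R c).convMul_apply]
  simpa [← (ℛ R ((ℛ R c).left _)).eq, Finset.sum_mul, Algebra.TensorProduct.tmul_mul_tmul,
    coassoc] using counit

lemma comul_comp_antipode_mul_includeLeft :
    toConv (δ ∘ₗ antipode R) * toConv (includeLeft : C →ₐ[R] C ⊗[R] C).toLinearMap =
      toConv ((includeRight : C →ₐ[R] C ⊗[R] C).toLinearMap ∘ₗ antipode R) := by
  rw [← comul_mul_includeRight_comp_antipode, ← mul_assoc, comul_left_inv, one_mul]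

end LinearMap

section Coaction

variable {R C M : Type*} [CommSemiring R] [AddCommMonoid C] [Module R C]
  [AddCommMonoid M] [Module R M]

abbrev IsCoassocCoaction [CoalgebraStruct R C] (ρ : M →ₗ[R] C ⊗[R] M) : Prop :=
  ∀ m, TensorProduct.assoc R C C M (map comul id (ρ m)) = map id ρ (ρ m)

abbrev IsCounitalCoaction [CoalgebraStruct R C] (ρ : M →ₗ[R] C ⊗[R] M) : Prop :=
  ∀ m, TensorProduct.lid R M (map counit id (ρ m)) = m

def coinvariants [One C] (ρ : M →ₗ[R] C ⊗[R] M) : Submodule R M :=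
  eqLocus ρ (TensorProduct.mk R C M 1)

end Coaction

section

universe u v w

variable (k : Type u) (A : Type v) (M : Type w) [Field k] [Ring A] [HopfAlgebra k A]
  [AddCommGroup M] [Module k M] [Module A M] [IsScalarTower k A M]

/-- The `A`-action on `M` as a `k`-bilinear map. -/
noncomputable def actionBilin : A →ₗ[k] M →ₗ[k] M where
  toFun a :=
    { toFun := fun m => a • m
      map_add' := fun m m' => smul_add a m m'
      map_smul' := fun c m => by
        simp only [RingHom.id_apply]
        rw [← algebraMap_smul A c m, ← mul_smul, ← Algebra.commutes, mul_smul,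
          algebraMap_smul] }
  map_add' a b := LinearMap.ext fun m => add_smul a b m
  map_smul' c a := LinearMap.ext fun m => smul_assoc c a m

/-- The action map `A ⊗[k] M →ₗ[k] M`. -/
noncomputable def actionHom : A ⊗[k] M →ₗ[k] M :=
  TensorProduct.lift (actionBilin k A M)

/-- The action of `A ⊗[k] A` on `A ⊗[k] M`, determined by
`(x ⊗ y) · (b ⊗ m) = (x * b) ⊗ (y • m)`. -/
noncomputable def bigAction : (A ⊗[k] A) ⊗[k] (A ⊗[k] M) →ₗ[k] A ⊗[k] M :=
  (TensorProduct.map (LinearMap.mul' k A) (actionHom k A M)).comp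
    (TensorProduct.tensorTensorTensorComm k A A A M).toLinearMap

variable {k A M}

@[simp]
lemma actionHom_tmul (a : A) (m : M) : actionHom k A M (a ⊗ₜ m) = a • m := rfl

@[simp]
lemma bigAction_tmul (x y b : A) (m : M) :
    bigAction k A M ((x ⊗ₜ y) ⊗ₜ (b ⊗ₜ m)) = (x * b) ⊗ₜ (y • m) := rfl

lemma bigAction_tmul_eq_lTensor_assoc (t : A ⊗[k] A) (b : A) (m : M) :
    bigAction k A M (t ⊗ₜ (b ⊗ₜ m)) =
      (actionHom k A M).lTensor A (TensorProduct.assoc k A A M ((t * (b ⊗ₜ 1)) ⊗ₜ m)) := by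
  induction t with
  | zero => simp
  | tmul x y => simp
  | add t t' ht ht' => simp [add_mul, add_tmul, ht, ht']

lemma bigAction_map_assoc (f : A →ₗ[k] A ⊗[k] A) (u : (A ⊗[k] A) ⊗[k] M) :
    bigAction k A M (map f id (TensorProduct.assoc k A A M u)) =
      (actionHom k A M).lTensor A (TensorProduct.assoc k A A M
        ((mul' k (A ⊗[k] A) ∘ₗ map f includeLeft.toLinearMap).rTensor M u)) := by
  induction u using TensorProduct.induction_on with
  | zero => simp
  | tmul t m => induction t with
    | zero => simp
    | tmul x y => simp [bigAction_tmul_eq_lTensor_assoc]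
    | add t t' ht ht' => simp [add_tmul, ht, ht']
  | add u u' hu hu' => simp [hu, hu']

variable (ρ : M →ₗ[k] A ⊗[k] M)

abbrev IsCoactionCompatible : Prop :=
  ∀ (a : A) (m : M), ρ (a • m) = bigAction k A M (comul a ⊗ₜ ρ m)

noncomputable def coinvariantProj : M →ₗ[k] M :=
  actionHom k A M ∘ₗ (antipode k).rTensor M ∘ₗ ρ

variable {ρ}

lemma IsCoactionCompatible.apply_actionHom (hcompat : IsCoactionCompatible ρ) (t : A ⊗[k] M) :
    ρ (actionHom k A M t) = bigAction k A M (map comul ρ t) := by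
  induction t with
  | zero => simp
  | tmul a n => exact hcompat a n
  | add t t' ht ht' => simp [ht, ht']

lemma IsCoactionCompatible.apply_smul_of_mem (hcompat : IsCoactionCompatible ρ)
    (a : A) {v : M} (hv : v ∈ coinvariants ρ) :
    ρ (a • v) = (actionHom k A M).lTensor A (TensorProduct.assoc k A A M (comul a ⊗ₜ v)) := by
  have hv : ρ v = 1 ⊗ₜ v := hv
  rw [hcompat, hv, bigAction_tmul_eq_lTensor_assoc, ← Algebra.TensorProduct.one_def, mul_one]

lemma coinvariantProj_mem (hcoassoc : IsCoassocCoaction ρ) (hcompat : IsCoactionCompatible ρ)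
    (m : M) : coinvariantProj ρ m ∈ coinvariants ρ := by
  have conv_identity :
      mul' k (A ⊗[k] A) ∘ₗ map (comul ∘ₗ antipode k) includeLeft.toLinearMap ∘ₗ comul =
        (includeRight : A →ₐ[k] A ⊗[k] A).toLinearMap ∘ₗ antipode k :=
    congr(ofConv $(comul_comp_antipode_mul_includeLeft (R := k) (C := A)))
  have includeRight_antipode (x : A ⊗[k] M) : (actionHom k A M).lTensor A
      (TensorProduct.assoc k A A M
        (((includeRight : A →ₐ[k] A ⊗[k] A).toLinearMap ∘ₗ antipode k).rTensor M x)) =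
      1 ⊗ₜ actionHom k A M ((antipode k).rTensor M x) := by
    induction x with
    | zero => simp
    | tmul a n => simp
    | add x x' hx hx' => simp only [map_add, hx, hx', tmul_add]
  change ρ (coinvariantProj ρ m) = 1 ⊗ₜ coinvariantProj ρ m
  calc ρ (coinvariantProj ρ m)
      = bigAction k A M (map comul ρ ((antipode k).rTensor M (ρ m))) :=
        hcompat.apply_actionHom _
    _ = bigAction k A M (map (comul ∘ₗ antipode k) id (map id ρ (ρ m))) := by
        rw [map_rTensor, map_map, comp_id, id_comp]
    _ = (actionHom k A M).lTensor A (TensorProduct.assoc k A A M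
          ((mul' k (A ⊗[k] A) ∘ₗ map (comul ∘ₗ antipode k) includeLeft.toLinearMap).rTensor M
            (comul.rTensor M (ρ m)))) := by
        rw [← hcoassoc, bigAction_map_assoc]
        rfl
    _ = 1 ⊗ₜ coinvariantProj ρ m := by
        rw [← rTensor_comp_apply, comp_assoc, conv_identity, includeRight_antipode]
        rfl

lemma coinvariantProj_smul_of_mem (hcompat : IsCoactionCompatible ρ)
    (a : A) {v : M} (hv : v ∈ coinvariants ρ) :
    coinvariantProj ρ (a • v) = counit (R := k) a • v := by
  have antipode_smul_smul (t : A ⊗[k] A) : actionHom k A M ((antipode k).rTensor M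
      ((actionHom k A M).lTensor A (TensorProduct.assoc k A A M (t ⊗ₜ v)))) =
      mul' k A ((antipode k).rTensor A t) • v := by
    induction t with
    | zero => simp
    | tmul x y => simp [mul_smul]
    | add t t' ht ht' => simp [add_tmul, add_smul, ht, ht']
  rw [coinvariantProj, comp_apply, comp_apply, hcompat.apply_smul_of_mem a hv, antipode_smul_smul,
    mul_antipode_rTensor_comul_apply, algebraMap_smul]

lemma actionHom_lTensor_coinvariantProj (hcoassoc : IsCoassocCoaction ρ)
    (hcounit : IsCounitalCoaction ρ) (m : M) :
    actionHom k A M ((coinvariantProj ρ).lTensor A (ρ m)) = m := by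
  have smul_antipode_smul (u : (A ⊗[k] A) ⊗[k] M) : actionHom k A M ((actionHom k A M ∘ₗ
      (antipode k).rTensor M).lTensor A (TensorProduct.assoc k A A M u)) =
      actionHom k A M ((mul' k A ∘ₗ (antipode k).lTensor A).rTensor M u) := by
    induction u using TensorProduct.induction_on with
    | zero => simp
    | tmul t m => induction t with
      | zero => simp
      | tmul x y => simp [mul_smul]
      | add t t' ht ht' => simp [add_tmul, ht, ht']
    | add u u' hu hu' => simp [hu, hu']
  have unit_smul (x : A ⊗[k] M) :
      actionHom k A M ((Algebra.linearMap k A ∘ₗ counit).rTensor M x) =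
        TensorProduct.lid k M (map counit id x) := by
    induction x with
    | zero => simp
    | tmul a n => simp [algebraMap_smul]
    | add x x' hx hx' => simp [hx, hx']
  have coassoc : ρ.lTensor A (ρ m) = TensorProduct.assoc k A A M (comul.rTensor M (ρ m)) :=
    (hcoassoc m).symm
  rw [coinvariantProj, ← comp_assoc, lTensor_comp_apply, coassoc, smul_antipode_smul,
    ← rTensor_comp_apply, comp_assoc, mul_antipode_lTensor_comul, unit_smul, hcounit]

noncomputable def toCoinvariants (hcoassoc : IsCoassocCoaction ρ)
    (hcompat : IsCoactionCompatible ρ) : M →ₗ[k] coinvariants ρ :=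
  (coinvariantProj ρ).codRestrict _ (coinvariantProj_mem hcoassoc hcompat)

lemma toCoinvariants_smul (hcoassoc : IsCoassocCoaction ρ) (hcompat : IsCoactionCompatible ρ)
    (a : A) (v : coinvariants ρ) :
    toCoinvariants hcoassoc hcompat (a • (v : M)) = counit (R := k) a • v :=
  Subtype.ext (coinvariantProj_smul_of_mem hcompat a v.2)

noncomputable def cofreeEquiv (hcoassoc : IsCoassocCoaction ρ) (hcounit : IsCounitalCoaction ρ)
    (hcompat : IsCoactionCompatible ρ) : A ⊗[k] coinvariants ρ ≃ₗ[k] M :=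
  LinearEquiv.ofLinearMap (actionHom k A M ∘ₗ (coinvariants ρ).subtype.lTensor A)
    ((toCoinvariants hcoassoc hcompat).lTensor A ∘ₗ ρ)
    (by
      ext m
      simp only [comp_apply, id_apply]
      rw [← lTensor_comp_apply, toCoinvariants, subtype_comp_codRestrict]
      exact actionHom_lTensor_coinvariantProj hcoassoc hcounit m)
    (by
      ext a v
      have lTensor_toCoinvariants (t : A ⊗[k] A) : (toCoinvariants hcoassoc hcompat).lTensor A
          ((actionHom k A M).lTensor A (TensorProduct.assoc k A A M (t ⊗ₜ v))) =
          TensorProduct.rid k A (counit.lTensor A t) ⊗ₜ v := by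
        induction t with
        | zero => simp
        | tmul x y => simp [toCoinvariants_smul, smul_tmul]
        | add t t' ht ht' => simp [add_tmul, ht, ht']
      simp [hcompat.apply_smul_of_mem a v.2, lTensor_toCoinvariants])

@[simp]
lemma cofreeEquiv_tmul (hcoassoc : IsCoassocCoaction ρ) (hcounit : IsCounitalCoaction ρ)
    (hcompat : IsCoactionCompatible ρ) (a : A) (v : coinvariants ρ) :
    cofreeEquiv hcoassoc hcounit hcompat (a ⊗ₜ v) = a • (v : M) := rfl

/-- A left Hopf module `M` over a Hopf algebra `A` over a field `k` is cofree as an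
`A`-comodule: there are a `k`-vector space `V` and a `k`-linear isomorphism
`f : A ⊗[k] V ≃ M` intertwining the coaction `Δ ⊗ id_V` with `ρ`. -/
theorem hopfModule_cofree (ρ : M →ₗ[k] A ⊗[k] M)
    (hcoassoc : ∀ m : M,
      (TensorProduct.assoc k A A M)
          ((TensorProduct.map Coalgebra.comul LinearMap.id) (ρ m)) =
        (TensorProduct.map LinearMap.id ρ) (ρ m))
    (hcounit : ∀ m : M,
      (TensorProduct.lid k M)
          ((TensorProduct.map Coalgebra.counit LinearMap.id) (ρ m)) = m)
    (hcompat : ∀ (a : A) (m : M),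
      ρ (a • m) = bigAction k A M (Coalgebra.comul a ⊗ₜ[k] ρ m)) :
    ∃ (V : Type w) (_ : AddCommGroup V) (_ : Module k V) (f : (A ⊗[k] V) ≃ₗ[k] M),
      ∀ (a : A) (v : V),
        ρ (f (a ⊗ₜ[k] v)) =
          (TensorProduct.map LinearMap.id f.toLinearMap)
            ((TensorProduct.assoc k A A V) (Coalgebra.comul a ⊗ₜ[k] v)) := by
  refine ⟨coinvariants ρ, inferInstance, inferInstance, cofreeEquiv hcoassoc hcounit hcompat,
    fun a v => ?_⟩
  rw [cofreeEquiv_tmul, IsCoactionCompatible.apply_smul_of_mem hcompat a v.2]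
  induction comul (R := k) a with
  | zero => simp
  | tmul x y => simp
  | add t t' ht ht' => simp [add_tmul, ht, ht']

end
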